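/- arXiv:2407.08809 — 2 statements merged into one kernel-verified Lean document; each statement's English description precedes it below -/
import Mathlib

section
/- Let G be a finitely generated group, let Z ⊴ G be a finitely generated normal subgroup that is undistorted in G and has sub-exponential growth, and let H = G/Z. Let S be a finite generating set of G and let S̄ denote its image in H under the quotient map. Then for every real number L, |B_k(G,S)|^{1/k} → L as k → ∞ if and only if |B_k(H,S̄)|^{1/k} → L as k → ∞; in particular e(G,S) = e(H,S̄) whenever either limit exists. -/
/-- The ball of radius `k` in a group `G` with respect to a (generating) set `S`:
elements expressible as a product of at most `k` elements of `S ∪ S⁻¹`. -/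
def ball {G : Type*} [Group G] (S : Set G) (k : ℕ) : Set G :=
  {g | ∃ l : List G, l.length ≤ k ∧ (∀ x ∈ l, x ∈ S ∨ x⁻¹ ∈ S) ∧ l.prod = g}

/-- The set `ξ(G)` of exponential growth rates of `G`: real numbers `L` such that
`|B_k(G,S)|^{1/k} → L` for some finite generating set `S` of `G`. -/
noncomputable def growthRates (G : Type*) [Group G] : Set ℝ :=
  {L | ∃ S : Finset G, Subgroup.closure (S : Set G) = ⊤ ∧
    Filter.Tendsto (fun k : ℕ => ((ball (S : Set G) k).ncard : ℝ) ^ (1 / (k : ℝ)))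
      Filter.atTop (nhds L)}

/-- The word length `|g|_S`: the least `k` such that `g` lies in the ball of radius `k`. -/
noncomputable def wordLength {G : Type*} [Group G] (S : Set G) (g : G) : ℕ :=
  sInf {k | g ∈ ball S k}

/-- A finitely generated subgroup `Z ≤ G` is undistorted if, for some finite generating
sets `T` of `Z` and `S` of `G`, there is `C > 0` with `|h|_T ≤ C·(|h|_S + 1)` for all `h ∈ Z`. -/
def Undistorted {G : Type*} [Group G] (Z : Subgroup G) : Prop :=
  ∃ T : Finset Z, Subgroup.closure (T : Set Z) = ⊤ ∧
    ∃ S : Finset G, Subgroup.closure (S : Set G) = ⊤ ∧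
      ∃ C : ℝ, 0 < C ∧ ∀ h : Z,
        (wordLength (T : Set Z) h : ℝ) ≤ C * ((wordLength (S : Set G) (h : G) : ℝ) + 1)

/-- A group `Z` has sub-exponential growth if `|B_k(Z,T)|^{1/k} → 1` for some finite
generating set `T` of `Z`. -/
def SubExpGrowth (Z : Type*) [Group Z] : Prop :=
  ∃ T : Finset Z, Subgroup.closure (T : Set Z) = ⊤ ∧
    Filter.Tendsto (fun k : ℕ => ((ball (T : Set Z) k).ncard : ℝ) ^ (1 / (k : ℝ)))
      Filter.atTop (nhds 1)

/-!
The quotient map `f : G → H` sends `B_k(G,S)` onto `B_k(H,S̄)`, so `|B_k(H,S̄)| ≤ |B_k(G,S)|`.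
Conversely, two elements of `B_k(G,S)` with the same image differ by an element of
`Z ∩ B_{2k}(G,S)`, so `|B_k(G,S)| ≤ |B_k(H,S̄)| · |Z ∩ B_{2k}(G,S)|`. Undistortion puts
`Z ∩ B_{2k}(G,S)` inside a ball `B_{Ek}(Z,T)` of linearly larger radius, whose `k`-th root
still tends to `1` by sub-exponential growth; the two `k`-th roots are therefore squeezed together.
-/

open Filter Pointwise Topology

section Ball

variable {G : Type*} [Group G] {S : Set G}

lemma one_mem_ball (S : Set G) (k : ℕ) : (1 : G) ∈ ball S k :=
  ⟨[], by simp, by simp, by simp⟩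

lemma ball_mono {k m : ℕ} (h : k ≤ m) : ball S k ⊆ ball S m :=
  fun _ ⟨l, hl, hmem, hprod⟩ => ⟨l, hl.trans h, hmem, hprod⟩

lemma mul_mem_ball {g g' : G} {k m : ℕ} (hg : g ∈ ball S k) (hg' : g' ∈ ball S m) :
    g * g' ∈ ball S (k + m) := by
  obtain ⟨l, hl, hmem, rfl⟩ := hg
  obtain ⟨l', hl', hmem', rfl⟩ := hg'
  exact ⟨l ++ l', by simpa using Nat.add_le_add hl hl',
    fun x hx => (List.mem_append.1 hx).elim (hmem x) (hmem' x), List.prod_append⟩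

lemma inv_mem_ball {g : G} {k : ℕ} (hg : g ∈ ball S k) : g⁻¹ ∈ ball S k := by
  obtain ⟨l, hl, hmem, rfl⟩ := hg
  refine ⟨(l.map Inv.inv).reverse, by simpa using hl, fun x hx => ?_,
    (List.prod_inv_reverse l).symm⟩
  obtain ⟨y, hy, rfl⟩ := List.mem_map.1 (List.mem_reverse.1 hx)
  simpa [or_comm] using hmem y hy

lemma inv_mul_ball_subset (S : Set G) (k : ℕ) : (ball S k)⁻¹ * ball S k ⊆ ball S (2 * k) := by
  rintro _ ⟨g, hg, g', hg', rfl⟩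
  simpa [two_mul] using mul_mem_ball (inv_mem_ball (Set.mem_inv.1 hg)) hg'

lemma ball_finite {S : Set G} (hS : S.Finite) (k : ℕ) : (ball S k).Finite := by
  have : Finite ↥(S ∪ S⁻¹) := (hS.union hS.inv).to_subtype
  refine ((List.finite_length_le ↥(S ∪ S⁻¹) k).image
    fun l => (l.map Subtype.val).prod).subset ?_
  rintro _ ⟨l, hl, hmem, rfl⟩
  lift l to List ↥(S ∪ S⁻¹) using fun x hx => (hmem x hx).imp id Set.mem_inv.2
  exact ⟨l, by simpa using hl, rfl⟩

lemma exists_mem_ball (hS : Subgroup.closure S = ⊤) (g : G) : ∃ k, g ∈ ball S k := by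
  induction hS ▸ Subgroup.mem_top g using Subgroup.closure_induction with
  | mem x hx => exact ⟨1, [x], by simp, by simp [hx], by simp⟩
  | one => exact ⟨0, one_mem_ball S 0⟩
  | mul x y _ _ ihx ihy =>
    obtain ⟨k, hk⟩ := ihx
    obtain ⟨m, hm⟩ := ihy
    exact ⟨k + m, mul_mem_ball hk hm⟩
  | inv x _ ih =>
    obtain ⟨k, hk⟩ := ih
    exact ⟨k, inv_mem_ball hk⟩

lemma mem_ball_wordLength (hS : Subgroup.closure S = ⊤) (g : G) :
    g ∈ ball S (wordLength S g) :=
  Nat.sInf_mem (exists_mem_ball hS g)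

lemma wordLength_le {g : G} {k : ℕ} (h : g ∈ ball S k) : wordLength S g ≤ k :=
  Nat.sInf_le h

lemma list_prod_mem_ball {m : ℕ} {l : List G} (h : ∀ x ∈ l, x ∈ ball S m) :
    l.prod ∈ ball S (m * l.length) := by
  induction l with
  | nil => exact one_mem_ball S _
  | cons x t ih =>
    have := mul_mem_ball (h x List.mem_cons_self)
      (ih fun y hy => h y (List.mem_cons_of_mem x hy))
    rwa [List.length_cons, Nat.mul_succ, Nat.add_comm]

lemma exists_ball_subset_ball_mul {S' : Set G} (hS : Subgroup.closure S = ⊤) (hS' : S'.Finite) :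
    ∃ m : ℕ, 0 < m ∧ ∀ k, ball S' k ⊆ ball S (m * k) := by
  obtain ⟨m, hm⟩ := ((hS'.union hS'.inv).image (wordLength S)).bddAbove
  refine ⟨m + 1, m.succ_pos, fun k => ?_⟩
  rintro _ ⟨l, hl, hmem, rfl⟩
  refine ball_mono (Nat.mul_le_mul_left _ hl) (list_prod_mem_ball fun x hx => ?_)
  refine ball_mono (Nat.le_succ_of_le (hm ⟨x, ?_, rfl⟩)) (mem_ball_wordLength hS x)
  exact (hmem x hx).imp id Set.mem_inv.2

lemma image_ball {H : Type*} [Group H] (f : G →* H) (S : Set G) (k : ℕ) :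
    ball (f '' S) k = f '' ball S k := by
  refine Set.Subset.antisymm ?_ ?_
  · rintro _ ⟨l, hl, hmem, rfl⟩
    have hlift : ∀ x ∈ l, ∃ s, (s ∈ S ∨ s⁻¹ ∈ S) ∧ f s = x := by
      intro x hx
      rcases hmem x hx with ⟨s, hs, rfl⟩ | ⟨s, hs, hfs⟩
      · exact ⟨s, Or.inl hs, rfl⟩
      · exact ⟨s⁻¹, Or.inr (by simpa using hs), by rw [map_inv, hfs, inv_inv]⟩
    choose! σ hσS hσf using hlift
    refine ⟨(l.map σ).prod, ⟨l.map σ, by simpa using hl, ?_, rfl⟩, ?_⟩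
    · simpa using hσS
    · rw [map_list_prod, List.map_map, List.map_congr_left (f := f ∘ σ) (g := id) hσf,
        List.map_id]
  · rintro _ ⟨g, ⟨l, hl, hmem, rfl⟩, rfl⟩
    refine ⟨l.map f, by simpa using hl, ?_, (map_list_prod f l).symm⟩
    simp only [List.mem_map, forall_exists_index, and_imp, forall_apply_eq_imp_iff₂]
    exact fun y hy => (hmem y hy).imp (Set.mem_image_of_mem f) fun h => ⟨y⁻¹, h, map_inv f y⟩

end Ball

section Fibres

variable {G H : Type*} [Group G] [Group H]

/-- Fibres of `f` on `A` are left translates of subsets of `ker f ∩ A⁻¹ * A`. -/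
lemma Set.ncard_le_ncard_image_mul_ncard_ker_inter (f : G →* H) {A : Set G} (hA : A.Finite) :
    A.ncard ≤ (f '' A).ncard * ((f.ker : Set G) ∩ (A⁻¹ * A)).ncard := by
  set σ : H → G := Function.invFunOn f A
  have hσ_mem : ∀ g ∈ A, σ (f g) ∈ A := fun g hg => Function.invFunOn_mem ⟨g, hg, rfl⟩
  have hσ_eq : ∀ g ∈ A, f (σ (f g)) = f g := fun g hg => Function.invFunOn_eq ⟨g, hg, rfl⟩
  calc A.ncard ≤ ((f '' A) ×ˢ ((f.ker : Set G) ∩ (A⁻¹ * A))).ncard := by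
        refine Set.ncard_le_ncard_of_injOn (fun g => (f g, (σ (f g))⁻¹ * g)) ?_ ?_
          ((hA.image f).prod ((hA.inv.mul hA).inter_of_right _))
        · intro g hg
          refine ⟨Set.mem_image_of_mem f hg, ?_, Set.mul_mem_mul (by simpa using hσ_mem g hg) hg⟩
          simp [MonoidHom.mem_ker, hσ_eq g hg]
        · intro g _ g' _ h
          obtain ⟨hf, hσ⟩ := Prod.ext_iff.1 h
          simp only at hf hσ
          rw [hf] at hσ
          exact mul_left_cancel hσ
    _ = _ := Set.ncard_prod

lemma ncard_ball_le_ncard_ball_image_mul (f : G →* H) {S : Set G} (hS : S.Finite) (k : ℕ) :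
    (ball S k).ncard ≤ (ball (f '' S) k).ncard * ((f.ker : Set G) ∩ ball S (2 * k)).ncard := by
  rw [image_ball]
  refine (Set.ncard_le_ncard_image_mul_ncard_ker_inter f (ball_finite hS k)).trans
    (Nat.mul_le_mul_left _ (Set.ncard_le_ncard ?_ ((ball_finite hS _).inter_of_right _)))
  exact Set.inter_subset_inter_right _ (inv_mul_ball_subset S k)

end Fibres

lemma Undistorted.exists_ncard_inter_ball_le {G : Type*} [Group G] {Z : Subgroup G}
    (hZ : Undistorted Z) {T : Set Z} (hT : Subgroup.closure T = ⊤) (hT_fin : T.Finite)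
    {S : Set G} (hS : S.Finite) :
    ∃ e : ℕ, 0 < e ∧ ∀ k, 0 < k → ((Z : Set G) ∩ ball S k).ncard ≤ (ball T (e * k)).ncard := by
  obtain ⟨T₀, hT₀, S₀, hS₀, C, hC, hdist⟩ := hZ
  obtain ⟨m, -, hSS₀⟩ := exists_ball_subset_ball_mul hS₀ hS
  obtain ⟨m', hm', hT₀T⟩ := exists_ball_subset_ball_mul hT T₀.finite_toSet
  have hC' : 0 < ⌈C⌉₊ := Nat.ceil_pos.2 hC
  refine ⟨m' * (⌈C⌉₊ * (m + 1)), by positivity, fun k hk => ?_⟩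
  have hsub : (Z : Set G) ∩ ball S k ⊆ Subtype.val '' ball T (m' * (⌈C⌉₊ * (m + 1)) * k) := by
    rintro g ⟨hgZ, hg⟩
    refine ⟨⟨g, hgZ⟩, ?_, rfl⟩
    have hS₀_len : (wordLength (S₀ : Set G) g : ℝ) ≤ m * k := by
      exact_mod_cast wordLength_le (hSS₀ k hg)
    have hT₀_len : (wordLength (T₀ : Set Z) ⟨g, hgZ⟩ : ℝ) ≤ (⌈C⌉₊ * (m + 1) * k : ℕ) :=
      calc _ ≤ C * (wordLength (S₀ : Set G) g + 1) := hdist ⟨g, hgZ⟩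
        _ ≤ ⌈C⌉₊ * (m * k + k) := by
          have : (1 : ℝ) ≤ k := by exact_mod_cast hk
          gcongr
          exact Nat.le_ceil C
        _ = _ := by push_cast; ring
    rw [mul_assoc]
    exact hT₀T _ (ball_mono (by exact_mod_cast hT₀_len) (mem_ball_wordLength hT₀ _))
  calc _ ≤ _ := Set.ncard_le_ncard hsub ((ball_finite hT_fin _).image _)
    _ = _ := Set.ncard_image_of_injective _ Subtype.val_injective

lemma tendsto_rpow_one_div_comp_mul {c : ℕ → ℕ} {e : ℕ} (he : 0 < e)
    (h : Tendsto (fun m : ℕ => (c m : ℝ) ^ (1 / (m : ℝ))) atTop (𝓝 1)) :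
    Tendsto (fun k : ℕ => (c (e * k) : ℝ) ^ (1 / (k : ℝ))) atTop (𝓝 1) := by
  have h_pow := (h.comp (tendsto_id.const_mul_atTop' he)).pow e
  rw [one_pow] at h_pow
  refine h_pow.congr' ?_
  filter_upwards [eventually_gt_atTop 0] with k hk
  rw [Function.comp_apply, ← Real.rpow_natCast, ← Real.rpow_mul (Nat.cast_nonneg _)]
  congr 1
  field_simp
  simp

lemma tendsto_rpow_one_div_iff_of_le_of_le_mul {a b c : ℕ → ℕ} (hba : ∀ k, b k ≤ a k)
    (habc : ∀ᶠ k in atTop, a k ≤ b k * c k)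
    (hc : Tendsto (fun k : ℕ => (c k : ℝ) ^ (1 / (k : ℝ))) atTop (𝓝 1)) (L : ℝ) :
    Tendsto (fun k : ℕ => (a k : ℝ) ^ (1 / (k : ℝ))) atTop (𝓝 L) ↔
      Tendsto (fun k : ℕ => (b k : ℝ) ^ (1 / (k : ℝ))) atTop (𝓝 L) := by
  have hba' : ∀ k, (b k : ℝ) ^ (1 / (k : ℝ)) ≤ (a k : ℝ) ^ (1 / (k : ℝ)) := fun k =>
    Real.rpow_le_rpow (Nat.cast_nonneg _) (by exact_mod_cast hba k) (by positivity)
  have habc' : ∀ᶠ k : ℕ in atTop,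
      (a k : ℝ) ^ (1 / (k : ℝ)) ≤ (b k : ℝ) ^ (1 / (k : ℝ)) * (c k : ℝ) ^ (1 / (k : ℝ)) := by
    filter_upwards [habc] with k hk
    rw [← Real.mul_rpow (Nat.cast_nonneg _) (Nat.cast_nonneg _)]
    exact Real.rpow_le_rpow (Nat.cast_nonneg _) (by exact_mod_cast hk) (by positivity)
  constructor
  · intro ha
    have h_low : Tendsto (fun k : ℕ => (a k : ℝ) ^ (1 / (k : ℝ)) / (c k : ℝ) ^ (1 / (k : ℝ)))
        atTop (𝓝 L) := by
      rw [← div_one L]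
      exact ha.div hc one_ne_zero
    refine tendsto_of_tendsto_of_tendsto_of_le_of_le' h_low ha ?_ (Eventually.of_forall hba')
    filter_upwards [habc', hc.eventually (lt_mem_nhds one_pos)] with k hk hc_pos
    exact (div_le_iff₀ hc_pos).2 hk
  · intro hb
    exact tendsto_of_tendsto_of_tendsto_of_le_of_le' hb (by simpa using hb.mul hc)
      (Eventually.of_forall hba') habc'

theorem growth_limit_eq_quotient_general (G : Type*) [Group G] (Z : Subgroup G) [Z.Normal]
    (hund : Undistorted Z) (hsub : SubExpGrowth Z)
    (S : Finset G) (L : ℝ) :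
    Filter.Tendsto (fun k : ℕ => ((ball (S : Set G) k).ncard : ℝ) ^ (1 / (k : ℝ)))
        Filter.atTop (nhds L) ↔
      Filter.Tendsto
        (fun k : ℕ =>
          ((ball ((QuotientGroup.mk' Z) '' (S : Set G)) k).ncard : ℝ) ^ (1 / (k : ℝ)))
        Filter.atTop (nhds L) := by
  obtain ⟨T, hT, hT_growth⟩ := hsub
  obtain ⟨e, he, hZ_ball⟩ := hund.exists_ncard_inter_ball_le hT T.finite_toSet S.finite_toSet
  refine tendsto_rpow_one_div_iff_of_le_of_le_mul (fun k => ?_) ?_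
    (tendsto_rpow_one_div_comp_mul (Nat.mul_pos he two_pos) hT_growth) L
  · rw [image_ball]
    exact Set.ncard_image_le (ball_finite S.finite_toSet k)
  · filter_upwards [eventually_gt_atTop 0] with k hk
    refine (ncard_ball_le_ncard_ball_image_mul (QuotientGroup.mk' Z) S.finite_toSet k).trans ?_
    rw [QuotientGroup.ker_mk', mul_assoc]
    exact Nat.mul_le_mul_left _ (hZ_ball _ (by omega))

/-- For any finite generating set `S` of `G`, the growth rate of `G` w.r.t. `S` equals
the growth rate of `H = G/Z` w.r.t. the image generating set, when `Z ⊴ G` is finitely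
generated, undistorted and of sub-exponential growth. -/
theorem growth_limit_eq_quotient (G : Type*) [Group G] (Z : Subgroup G) [Z.Normal]
    (hZfg : ∃ T : Finset Z, Subgroup.closure (T : Set Z) = ⊤)
    (hund : Undistorted Z) (hsub : SubExpGrowth Z)
    (S : Finset G) (hS : Subgroup.closure (S : Set G) = ⊤) (L : ℝ) :
    Filter.Tendsto (fun k : ℕ => ((ball (S : Set G) k).ncard : ℝ) ^ (1 / (k : ℝ)))
        Filter.atTop (nhds L) ↔
      Filter.Tendsto
        (fun k : ℕ =>
          ((ball ((QuotientGroup.mk' Z) '' (S : Set G)) k).ncard : ℝ) ^ (1 / (k : ℝ)))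
        Filter.atTop (nhds L) :=
  growth_limit_eq_quotient_general G Z hund hsub S L
end

section
/- Let H be a group, let K ≤ H be a subgroup that is quasi-algebraic as a subset of H, and let N ≤ H be a subgroup of finite index. Then K ∩ N is quasi-algebraic as a subset of the group N. -/
/-- The solution set `V_{G,A}(S)` of a system of equations `S ⊆ F_m` over a group `G`,
relative to a subset `A ⊆ G`: tuples `(g_1, …, g_m)` such that every `s ∈ S` evaluates
into `A` under the homomorphism `F_m → G` sending the basis to the tuple. -/
def eqnSolutions {G : Type*} [Group G] (A : Set G) {m : ℕ}
    (S : Set (FreeGroup (Fin m))) : Set (Fin m → G) :=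
  {g | ∀ s ∈ S, FreeGroup.lift g s ∈ A}

/-- A subset `A` of a group `G` is quasi-algebraic if every system of equations is
equivalent (relative to `A`) to a finite subsystem. -/
def QuasiAlgebraic (G : Type*) [Group G] (A : Set G) : Prop :=
  ∀ m : ℕ, 1 ≤ m → ∀ S : Set (FreeGroup (Fin m)),
    ∃ S₀ : Finset (FreeGroup (Fin m)), ↑S₀ ⊆ S ∧
      eqnSolutions A (↑S₀ : Set (FreeGroup (Fin m))) = eqnSolutions A S

/-- A group is equationally Noetherian if `{1}` is quasi-algebraic in it. -/
def EquationallyNoetherian (G : Type*) [Group G] : Prop :=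
  QuasiAlgebraic G ({1} : Set G)

theorem FreeGroup.map_lift_apply {α G G' : Type*} [Group G] [Group G'] (φ : G →* G')
    (g : α → G) (s : FreeGroup α) : φ (FreeGroup.lift g s) = FreeGroup.lift (φ ∘ g) s :=
  FreeGroup.lift_unique (φ.comp (FreeGroup.lift g)) (by simp)

theorem eqnSolutions_preimage {G G' : Type*} [Group G] [Group G'] (φ : G →* G')
    (A : Set G') {m : ℕ} (S : Set (FreeGroup (Fin m))) :
    eqnSolutions (φ ⁻¹' A) S = (φ ∘ ·) ⁻¹' eqnSolutions A S := by
  ext g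
  simp only [eqnSolutions, Set.mem_preimage, Set.mem_ofPred_eq, FreeGroup.map_lift_apply]

theorem QuasiAlgebraic.preimage {G G' : Type*} [Group G] [Group G'] (φ : G →* G')
    {A : Set G'} (hA : QuasiAlgebraic G' A) : QuasiAlgebraic G (φ ⁻¹' A) := by
  intro m hm S
  obtain ⟨S₀, hS₀, hsol⟩ := hA m hm S
  exact ⟨S₀, hS₀, by rw [eqnSolutions_preimage, eqnSolutions_preimage, hsol]⟩

theorem quasiAlgebraic_inter_finiteIndex_general (H : Type*) [Group H] (K N : Subgroup H)
    (hK : QuasiAlgebraic H (K : Set H)) :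
    QuasiAlgebraic N {x : N | (x : H) ∈ K} :=
  hK.preimage N.subtype

/-- If `K ≤ H` is a quasi-algebraic subgroup and `N ≤ H` has finite index, then `K ∩ N`
is quasi-algebraic as a subset of the group `N`. -/
theorem quasiAlgebraic_inter_finiteIndex (H : Type*) [Group H] (K N : Subgroup H)
    (hK : QuasiAlgebraic H (K : Set H)) (hN : N.FiniteIndex) :
    QuasiAlgebraic N {x : N | (x : H) ∈ K} :=
  quasiAlgebraic_inter_finiteIndex_general H K N hK
end
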